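/- Let q be a prime and let k, s be integers with k invertible modulo q, k^d ≡ 1 (mod q) and k ≢ 1 (mod q), where d ≥ 1. Then for all integers i ≥ 0, the following congruences hold modulo q: T(k,s,d·i) ≡ d·i / (k(k−1)) if s ≡ 1 (mod q); T(k,s,d·i) ≡ d·i / (k(s−1)) if s·k ≡ 1 (mod q); and T(k,s,d·i) ≡ (s^{d·i} − 1) / (k(s−1)(sk−1)) otherwise. Here T(k,s,j) = ∑_{h=0}^{j−1} S(s,h)·k^{h−1} for j ≥ 1, T(k,s,0) = 0, S(s,h) = ∑_{i=0}^{h−1} s^i, and division denotes multiplication by a modular inverse. -/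

import Mathlib

/-!
Multiplying by `k` turns `T(k,s,n)` into `U = ∑_{h<n} S(s,h)·k^h`. Since `S(s,h)·(s-1) = s^h - 1`,
`U·(s-1) = ∑_{h<n} (sk)^h - ∑_{h<n} k^h`, and the second geometric sum vanishes because `k` is
an `n`-th root of unity other than `1` (here `n = d·i`). Multiplying once more by `sk - 1` gives
`s^n - 1`; when `sk = 1` the first sum is just `n`. When `s = 1`, `U = ∑_{h<n} h·k^h`, and
multiplying by `k - 1` telescopes to `n`.
-/

/-- `S(s,j) = ∑_{i=0}^{j-1} s^i` (so `S(s,0) = 0`), as an integer. -/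
def Ssum (s : ℤ) (j : ℕ) : ℤ := ∑ i ∈ Finset.range j, s ^ i

/-- `T(k,s,j) = ∑_{h=0}^{j-1} S(s,h)·k^{h-1}` (so `T(k,s,0) = T(k,s,1) = 0`; the term
`h = 0` vanishes since `S(s,0) = 0`, so truncated subtraction in the exponent is
harmless and `T` is an integer). -/
def Tsum (k s : ℤ) (j : ℕ) : ℤ := ∑ h ∈ Finset.range j, Ssum s h * k ^ (h - 1)

open Finset

section CommRing

variable {R : Type*} [CommRing R]

lemma sum_range_natCast_mul_pow_mul_sub_one (x : R) (n : ℕ) :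
    (∑ h ∈ range n, (h : R) * x ^ h) * (x - 1) = n * x ^ n - x ^ n + 1 - ∑ h ∈ range n, x ^ h := by
  induction n with
  | zero => simp
  | succ n ih =>
    rw [sum_range_succ, sum_range_succ, add_mul, ih]
    push_cast
    ring

lemma sum_geom_sum_mul_pow_mul_sub_one (s k : R) (n : ℕ) :
    (∑ h ∈ range n, (∑ j ∈ range h, s ^ j) * k ^ h) * (s - 1) =
      ∑ h ∈ range n, (s * k) ^ h - ∑ h ∈ range n, k ^ h := by
  rw [sum_mul, ← sum_sub_distrib]
  refine sum_congr rfl fun h _ => ?_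
  linear_combination k ^ h * geom_sum_mul s h

end CommRing

lemma Tsum_mul_self (k s : ℤ) (n : ℕ) : Tsum k s n * k = ∑ h ∈ range n, Ssum s h * k ^ h := by
  rw [Tsum, sum_mul]
  refine sum_congr rfl fun h _ => ?_
  cases h with
  | zero => simp [Ssum]
  | succ m => rw [Nat.add_sub_cancel, pow_succ, mul_assoc]

section Field

variable {F : Type*} [Field F] {k : F} {n : ℕ}

lemma geom_sum_eq_zero_of_pow_eq_one (hkn : k ^ n = 1) (hk1 : k ≠ 1) :
    ∑ h ∈ range n, k ^ h = 0 := by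
  rw [geom_sum_eq hk1, hkn, sub_self, zero_div]

lemma sum_geom_sum_mul_pow_mul_sub_one_of_pow_eq_one (s : F) (hkn : k ^ n = 1) (hk1 : k ≠ 1) :
    (∑ h ∈ range n, (∑ j ∈ range h, s ^ j) * k ^ h) * (s - 1) = ∑ h ∈ range n, (s * k) ^ h := by
  rw [sum_geom_sum_mul_pow_mul_sub_one, geom_sum_eq_zero_of_pow_eq_one hkn hk1, sub_zero]

lemma sum_range_natCast_mul_pow_mul_sub_one_of_pow_eq_one (hkn : k ^ n = 1) (hk1 : k ≠ 1) :
    (∑ h ∈ range n, (h : F) * k ^ h) * (k - 1) = n := by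
  rw [sum_range_natCast_mul_pow_mul_sub_one, geom_sum_eq_zero_of_pow_eq_one hkn hk1, hkn]
  ring

lemma Tsum_cast_eq_of_pow_eq_one [DecidableEq F] (k s : ℤ) (hk0 : (k : F) ≠ 0) (hkn : (k : F) ^ n = 1)
    (hk1 : (k : F) ≠ 1) :
    (Tsum k s n : F) =
      if (s : F) = 1 then (n : F) * ((k : F) * ((k : F) - 1))⁻¹
      else if (s : F) * (k : F) = 1 then (n : F) * ((k : F) * ((s : F) - 1))⁻¹
      else ((s : F) ^ n - 1) * ((k : F) * ((s : F) - 1) * ((s : F) * (k : F) - 1))⁻¹ := by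
  have hTk : (Tsum k s n : F) * k = ∑ h ∈ range n, (∑ j ∈ range h, (s : F) ^ j) * (k : F) ^ h := by
    exact_mod_cast congrArg (Int.cast : ℤ → F) (Tsum_mul_self k s n)
  have hTks := sum_geom_sum_mul_pow_mul_sub_one_of_pow_eq_one (s : F) hkn hk1
  rw [← hTk] at hTks
  split_ifs with hs1 hsk
  · rw [eq_mul_inv_iff_mul_eq₀ (mul_ne_zero hk0 (sub_ne_zero.mpr hk1)), ← mul_assoc, hTk]
    simpa [hs1] using sum_range_natCast_mul_pow_mul_sub_one_of_pow_eq_one hkn hk1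
  · rw [eq_mul_inv_iff_mul_eq₀ (mul_ne_zero hk0 (sub_ne_zero.mpr hs1)), ← mul_assoc, hTks]
    simp [hsk]
  · rw [eq_mul_inv_iff_mul_eq₀ (mul_ne_zero (mul_ne_zero hk0 (sub_ne_zero.mpr hs1))
      (sub_ne_zero.mpr hsk)), ← mul_assoc, ← mul_assoc, hTks, geom_sum_mul, mul_pow, hkn, mul_one]

end Field

theorem Tsum_congruence_general (q : ℕ) (hq : q.Prime) (k s : ℤ) (d : ℕ)
    (hku : IsUnit (k : ZMod q)) (hkd : (k : ZMod q) ^ d = 1) (hk1 : (k : ZMod q) ≠ 1)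
    (i : ℕ) :
    ((Tsum k s (d * i) : ℤ) : ZMod q) =
      if (s : ZMod q) = 1 then
        ((d * i : ℕ) : ZMod q) * ((k : ZMod q) * ((k : ZMod q) - 1))⁻¹
      else if (s : ZMod q) * (k : ZMod q) = 1 then
        ((d * i : ℕ) : ZMod q) * ((k : ZMod q) * ((s : ZMod q) - 1))⁻¹
      else
        ((s : ZMod q) ^ (d * i) - 1) *
          ((k : ZMod q) * ((s : ZMod q) - 1) * ((s : ZMod q) * (k : ZMod q) - 1))⁻¹ := by
  have := Fact.mk hq
  exact Tsum_cast_eq_of_pow_eq_one k s hku.ne_zero (n := d * i) (by rw [pow_mul, hkd, one_pow]) hk1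

/-- **Proposition (congruences for `T`), part (ii).** Let `q` be a prime and `k`, `s`
integers with `k` invertible mod `q`, `k^d ≡ 1 (mod q)` and `k ≢ 1 (mod q)`, where
`d ≥ 1`. Then for all `i ≥ 0`, modulo `q`:
`T(k,s,d·i) ≡ d·i/(k(k-1))` if `s ≡ 1`; `T(k,s,d·i) ≡ d·i/(k(s-1))` if `s·k ≡ 1`;
and `T(k,s,d·i) ≡ (s^{d·i} - 1)/(k(s-1)(sk-1))` otherwise. -/
theorem Tsum_congruence (q : ℕ) (hq : q.Prime) (k s : ℤ) (d : ℕ) (hd : 1 ≤ d)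
    (hku : IsUnit (k : ZMod q)) (hkd : (k : ZMod q) ^ d = 1) (hk1 : (k : ZMod q) ≠ 1)
    (i : ℕ) :
    ((Tsum k s (d * i) : ℤ) : ZMod q) =
      if (s : ZMod q) = 1 then
        ((d * i : ℕ) : ZMod q) * ((k : ZMod q) * ((k : ZMod q) - 1))⁻¹
      else if (s : ZMod q) * (k : ZMod q) = 1 then
        ((d * i : ℕ) : ZMod q) * ((k : ZMod q) * ((s : ZMod q) - 1))⁻¹
      else
        ((s : ZMod q) ^ (d * i) - 1) *
          ((k : ZMod q) * ((s : ZMod q) - 1) * ((s : ZMod q) * (k : ZMod q) - 1))⁻¹ :=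
  Tsum_congruence_general q hq k s d hku hkd hk1 i
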